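/- arXiv:1402.1899 — 2 statements merged into one kernel-verified Lean document; each statement's English description precedes it below -/
import Mathlib

section
/- A vector θ* ∈ ℝ^n is the unique minimizer of the ℓ1 problem (i.e., ‖φ(θ*)‖₁ < ‖φ(θ)‖₁ for all θ ≠ θ*) if and only if for every nonzero η ∈ ℝ^n, |Σ_{t ∈ I⁺(θ*)} ⟨η, x_t⟩ − Σ_{t ∈ I⁻(θ*)} ⟨η, x_t⟩| < Σ_{t ∈ I⁰(θ*)} |⟨η, x_t⟩|. -/
/-!
The map `s ↦ ∑ t, |φ t - s * d t|` is convex, so it lies above its tangent line at `s = 0⁺`,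
whose slope collects `|d t|` over the zeros of `φ` and `-sign (φ t) * d t` elsewhere; for small
`s > 0` it coincides with that line. Hence `θ*` is the strict minimizer iff this slope is positive
for `φ = φ(θ*)` and every direction `d = (⟨x_t, η⟩)_t` with `η ≠ 0`. The slope equals
`∑_{I⁰} |⟨η, x_t⟩| + (∑_{I⁺} - ∑_{I⁻}) ⟨η, x_t⟩`, and positivity for both `η` and `-η` is the
absolute-value condition.
-/

open Filter Matrix Finset Topology

/-- The right derivative at `s = 0` of `s ↦ |a - s * b|`. -/
noncomputable def absSubDeriv (a b : ℝ) : ℝ :=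
  if a = 0 then |b| else if a < 0 then b else -b

lemma abs_add_absSubDeriv_le (a b : ℝ) : |a| + absSubDeriv a b ≤ |a - b| := by
  unfold absSubDeriv
  rcases lt_trichotomy a 0 with h | rfl | h
  · simp only [h.ne, h, if_false, if_true, abs_of_neg h]
    linarith [neg_le_abs (a - b)]
  · simp
  · simp only [h.ne', (not_lt.2 h.le), if_false, abs_of_pos h]
    linarith [le_abs_self (a - b)]

lemma abs_sub_mul_eq_of_mul_abs_le {a b s : ℝ} (hs : 0 ≤ s) (h : a ≠ 0 → s * |b| ≤ |a|) :
    |a - s * b| = |a| + s * absSubDeriv a b := by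
  unfold absSubDeriv
  rcases lt_trichotomy a 0 with ha | rfl | ha
  · have := h ha.ne
    rw [abs_of_neg ha] at this
    simp only [ha.ne, ha, if_false, if_true, abs_of_neg ha]
    rw [abs_of_nonpos (by nlinarith [mul_le_mul_of_nonneg_left (neg_abs_le b) hs])]
    ring
  · simp [abs_mul, abs_of_nonneg hs]
  · have := h ha.ne'
    rw [abs_of_pos ha] at this
    simp only [ha.ne', not_lt.2 ha.le, if_false, abs_of_pos ha]
    rw [abs_of_nonneg (by nlinarith [mul_le_mul_of_nonneg_left (le_abs_self b) hs])]
    ring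

lemma eventually_abs_sub_mul_eq (a b : ℝ) :
    ∀ᶠ s in 𝓝[>] 0, |a - s * b| = |a| + s * absSubDeriv a b := by
  have hsmall : ∀ᶠ s in 𝓝[>] (0 : ℝ), a ≠ 0 → s * |b| ≤ |a| := by
    by_cases ha : a = 0
    · simp [ha]
    have : Tendsto (fun s : ℝ => s * |b|) (𝓝[>] 0) (𝓝 0) :=
      ((continuous_mul_const |b|).tendsto' 0 0 (zero_mul _)).mono_left nhdsWithin_le_nhds
    filter_upwards [this.eventually_le_const (abs_pos.2 ha)] with s hs _ using hs
  filter_upwards [hsmall, self_mem_nhdsWithin] with s h hs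
  exact abs_sub_mul_eq_of_mul_abs_le (le_of_lt hs) h

section

variable {ι : Type*} [Fintype ι]

/-- The right derivative at `s = 0` of `s ↦ ∑ t, |φ t - s * d t|`. -/
noncomputable def l1DirDeriv (φ d : ι → ℝ) : ℝ :=
  ∑ t, absSubDeriv (φ t) (d t)

lemma sum_abs_add_l1DirDeriv_le (φ d : ι → ℝ) :
    ∑ t, |φ t| + l1DirDeriv φ d ≤ ∑ t, |φ t - d t| := by
  rw [l1DirDeriv, ← sum_add_distrib]
  exact sum_le_sum fun t _ => abs_add_absSubDeriv_le (φ t) (d t)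

lemma eventually_sum_abs_sub_mul_eq (φ d : ι → ℝ) :
    ∀ᶠ s in 𝓝[>] 0, ∑ t, |φ t - s * d t| = ∑ t, |φ t| + s * l1DirDeriv φ d := by
  filter_upwards [eventually_all.2 fun t => eventually_abs_sub_mul_eq (φ t) (d t)] with s hs
  rw [l1DirDeriv, mul_sum, ← sum_add_distrib]
  exact sum_congr rfl fun t _ => hs t

lemma l1DirDeriv_eq (φ d : ι → ℝ) :
    l1DirDeriv φ d =
      (∑ t ∈ univ.filter (fun t => φ t < 0), d t - ∑ t ∈ univ.filter (fun t => 0 < φ t), d t)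
        + ∑ t ∈ univ.filter (fun t => φ t = 0), |d t| := by
  simp only [sum_filter, ← sum_sub_distrib, ← sum_add_distrib, l1DirDeriv]
  refine sum_congr rfl fun t _ => ?_
  unfold absSubDeriv
  rcases lt_trichotomy (φ t) 0 with h | h | h
  · simp [h, h.ne, not_lt.2 h.le]
  · simp [h]
  · simp [h, h.ne', not_lt.2 h.le]

theorem forall_ne_zero_sum_abs_lt_iff {E : Type*} [AddCommGroup E] [Module ℝ E]
    (L : E →ₗ[ℝ] ι → ℝ) (φ : ι → ℝ) :
    (∀ η ≠ 0, ∑ t, |φ t| < ∑ t, |φ t - L η t|) ↔ ∀ η ≠ 0, 0 < l1DirDeriv φ (L η) := by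
  refine ⟨fun h η hη => ?_, fun h η hη => ?_⟩
  · obtain ⟨s, heq, hs⟩ :=
      ((eventually_sum_abs_sub_mul_eq φ (L η)).and self_mem_nhdsWithin).exists
    have hlt := h (s • η) (smul_ne_zero (ne_of_gt hs) hη)
    simp only [map_smul, Pi.smul_apply, smul_eq_mul, heq] at hlt
    exact pos_of_mul_pos_right (by linarith) (le_of_lt hs)
  · exact (lt_add_of_pos_right _ (h η hη)).trans_le (sum_abs_add_l1DirDeriv_le φ (L η))

theorem forall_ne_sum_abs_sub_dotProduct_lt_iff {κ : Type*} [Fintype κ] (x : ι → κ → ℝ)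
    (y : ι → ℝ) (θs : κ → ℝ) :
    (∀ θ ≠ θs, ∑ t, |y t - x t ⬝ᵥ θs| < ∑ t, |y t - x t ⬝ᵥ θ|) ↔
      ∀ η ≠ 0, 0 < l1DirDeriv (fun t => y t - x t ⬝ᵥ θs) (fun t => x t ⬝ᵥ η) := by
  refine Iff.trans ?_ (forall_ne_zero_sum_abs_lt_iff (mulVecLin (of x)) _)
  refine ⟨fun h η hη => ?_, fun h θ hθ => ?_⟩
  · simpa [mulVec, dotProduct_add, sub_sub] using h (θs + η) (by simpa using hη)
  · simpa [mulVec, dotProduct_sub] using h (θ - θs) (sub_ne_zero.2 hθ)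

end

theorem stmt5_general (n N : ℕ)
    (x : Fin N → Fin n → ℝ) (y : Fin N → ℝ) (θs : Fin n → ℝ) :
    (∀ θ : Fin n → ℝ, θ ≠ θs → ∑ t, |y t - x t ⬝ᵥ θs| < ∑ t, |y t - x t ⬝ᵥ θ|) ↔
      (∀ η : Fin n → ℝ, η ≠ 0 →
        |(∑ t ∈ univ.filter (fun t => x t ⬝ᵥ θs > y t), η ⬝ᵥ x t)
          - (∑ t ∈ univ.filter (fun t => x t ⬝ᵥ θs < y t), η ⬝ᵥ x t)|
          < ∑ t ∈ univ.filter (fun t => x t ⬝ᵥ θs = y t), |η ⬝ᵥ x t|) := by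
  rw [forall_ne_sum_abs_sub_dotProduct_lt_iff]
  have hD : ∀ η : Fin n → ℝ, l1DirDeriv (fun t => y t - x t ⬝ᵥ θs) (fun t => x t ⬝ᵥ η) =
      ((∑ t ∈ univ.filter (fun t => x t ⬝ᵥ θs > y t), η ⬝ᵥ x t)
          - (∑ t ∈ univ.filter (fun t => x t ⬝ᵥ θs < y t), η ⬝ᵥ x t))
        + ∑ t ∈ univ.filter (fun t => x t ⬝ᵥ θs = y t), |η ⬝ᵥ x t| := by
    intro η
    simp only [l1DirDeriv_eq, sub_neg, sub_pos, sub_eq_zero, dotProduct_comm η, eq_comm (a := y _)]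
  refine ⟨fun h η hη => abs_lt.2 ⟨?_, ?_⟩, fun h η hη => ?_⟩
  · linarith [hD η ▸ h η hη]
  · have h' := hD (-η) ▸ h (-η) (neg_ne_zero.2 hη)
    simp only [neg_dotProduct, sum_neg_distrib, abs_neg] at h'
    linarith
  · linarith [hD η, (abs_lt.1 (h η hη)).1]

/-- `θ*` is the unique minimizer of the ℓ1 problem iff for every
nonzero `η ∈ ℝ^n`,
`|∑_{t ∈ I⁺(θ*)} ⟨η,x_t⟩ − ∑_{t ∈ I⁻(θ*)} ⟨η,x_t⟩| < ∑_{t ∈ I⁰(θ*)} |⟨η,x_t⟩|`. -/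
theorem stmt5 (n N : ℕ) (hn : 1 ≤ n) (hN : 1 ≤ N)
    (x : Fin N → Fin n → ℝ) (y : Fin N → ℝ) (θs : Fin n → ℝ) :
    (∀ θ : Fin n → ℝ, θ ≠ θs → ∑ t, |y t - x t ⬝ᵥ θs| < ∑ t, |y t - x t ⬝ᵥ θ|) ↔
      (∀ η : Fin n → ℝ, η ≠ 0 →
        |(∑ t ∈ univ.filter (fun t => x t ⬝ᵥ θs > y t), η ⬝ᵥ x t)
          - (∑ t ∈ univ.filter (fun t => x t ⬝ᵥ θs < y t), η ⬝ᵥ x t)|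
          < ∑ t ∈ univ.filter (fun t => x t ⬝ᵥ θs = y t), |η ⬝ᵥ x t|) :=
  stmt5_general n N x y θs
end

section
/- Suppose rank(X) = n. Let k be an integer with ν_n(X) ≤ k ≤ N and suppose that for every subset I ⊆ 𝕀 with |I| = k one has ‖X_I^⊤ (X_I X_I^⊤)^{−1} X_{I^c}‖_∞ ≤ 1 (the inverse exists since rank(X_I) = n when |I| = k ≥ ν_n(X)). Then every θ ∈ ℝ^n with |I⁰(θ)| ≥ k solves the ℓ1 problem, i.e., ‖φ(θ)‖₁ ≤ ‖φ(θ')‖₁ for all θ' ∈ ℝ^n. -/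
/-!
Choose `I ⊆ I⁰(θ)` with `|I| = k`. Since `k ≥ ν_n(X)`, the columns `X_I` have rank `n`, so the
Gram matrix `G = X_I X_Iᵀ` is invertible and `x_t = ∑_{s ∈ I} ⟨x_s, G⁻¹ x_t⟩ x_s` for every `t`.
The norm hypothesis then gives the null-space-type inequality
`∑_{t ∉ I} |⟨x_t, δ⟩| ≤ ∑_{s ∈ I} |⟨x_s, δ⟩|` for all `δ`. As `φ(θ)` vanishes on `I`, the
triangle inequality on `Iᶜ` turns this into `‖φ(θ)‖₁ ≤ ‖φ(θ + δ)‖₁`.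
-/

open Matrix Finset

/-- The `n × |S|` submatrix of the regressor matrix `X` formed by the columns
(regressors) indexed by the finite set `S`. -/
noncomputable def colSub (n N : ℕ) (x : Fin N → Fin n → ℝ) (S : Finset (Fin N)) :
    Matrix (Fin n) {t // t ∈ S} ℝ :=
  Matrix.of fun i t => x t.1 i

/-- `ν_n(X)`: the smallest integer `m` such that every `n × m` submatrix of
columns of `X` has rank `n`. -/
noncomputable def nuX (n N : ℕ) (x : Fin N → Fin n → ℝ) : ℕ :=
  sInf {m : ℕ | ∀ S : Finset (Fin N), S.card = m → (colSub n N x S).rank = n}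

/-- The Gram matrix `X_I X_I^⊤` of the columns of `X` indexed by `I`. -/
noncomputable def gramOn (n N : ℕ) (x : Fin N → Fin n → ℝ) (I : Finset (Fin N)) :
    Matrix (Fin n) (Fin n) ℝ :=
  Matrix.of fun i j => ∑ t ∈ I, x t i * x t j

theorem Matrix.isUnit_of_rank_eq_card {K m : Type*} [Field K] [Fintype m] [DecidableEq m]
    {A : Matrix m m K} (h : A.rank = Fintype.card m) : IsUnit A := by
  have hrange : LinearMap.range A.mulVecLin = ⊤ := by
    apply Submodule.eq_top_of_finrank_eq
    rw [← Matrix.rank, h, Module.finrank_fintype_fun_eq_card]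
  exact mulVec_surjective_iff_isUnit.mp (LinearMap.range_eq_top.mp hrange)

theorem Matrix.dotProduct_mulVec_comm_of_isSymm {R m : Type*} [CommSemiring R] [Fintype m]
    {A : Matrix m m R} (hA : A.IsSymm) (v w : m → R) : v ⬝ᵥ A *ᵥ w = w ⬝ᵥ A *ᵥ v := by
  rw [dotProduct_mulVec, ← mulVec_transpose, hA.eq, dotProduct_comm]

section Regressors

variable (n N : ℕ) (x : Fin N → Fin n → ℝ)

theorem rank_colSub_univ :
    (colSub n N x univ).rank = (Matrix.of fun i t => x t i : Matrix (Fin n) (Fin N) ℝ).rank :=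
  rank_submatrix (Matrix.of fun i t => x t i) (Equiv.refl (Fin n))
    (Equiv.subtypeUnivEquiv (p := (· ∈ univ)) mem_univ)

theorem rank_colSub_mono {S I : Finset (Fin N)} (h : S ⊆ I) :
    (colSub n N x S).rank ≤ (colSub n N x I).rank :=
  rank_submatrix_le (colSub n N x I) id (Set.inclusion h)

theorem rank_colSub_of_nuX_le
    (hrank : (Matrix.of fun i t => x t i : Matrix (Fin n) (Fin N) ℝ).rank = n)
    {I : Finset (Fin N)} (hI : nuX n N x ≤ I.card) : (colSub n N x I).rank = n := by
  -- the set defining `nuX` is nonempty, so its `sInf` is attained (not the junk `sInf ∅ = 0`)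
  have hN : N ∈ {m : ℕ | ∀ S : Finset (Fin N), S.card = m → (colSub n N x S).rank = n} := by
    intro S hS
    rw [(card_eq_iff_eq_univ S).mp (by rw [hS, Fintype.card_fin]), rank_colSub_univ, hrank]
  obtain ⟨S, hSI, hS⟩ := exists_subset_card_eq hI
  refine le_antisymm ?_ ?_
  · simpa using (colSub n N x I).rank_le_card_height
  · exact (Nat.sInf_mem ⟨N, hN⟩ S hS).symm.le.trans (rank_colSub_mono n N x hSI)

theorem gramOn_eq_mul_transpose (I : Finset (Fin N)) :
    gramOn n N x I = colSub n N x I * (colSub n N x I)ᵀ := by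
  ext i j
  simp only [gramOn, colSub, mul_apply, transpose_apply, of_apply]
  exact (sum_coe_sort I fun t => x t i * x t j).symm

theorem isSymm_gramOn (I : Finset (Fin N)) : (gramOn n N x I).IsSymm :=
  IsSymm.ext fun _ _ => sum_congr rfl fun _ _ => mul_comm _ _

theorem isUnit_gramOn {I : Finset (Fin N)} (hI : (colSub n N x I).rank = n) :
    IsUnit (gramOn n N x I) := by
  apply isUnit_of_rank_eq_card
  rw [gramOn_eq_mul_transpose, rank_self_mul_transpose, hI, Fintype.card_fin]

theorem gramOn_mulVec (I : Finset (Fin N)) (δ : Fin n → ℝ) :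
    gramOn n N x I *ᵥ δ = ∑ s ∈ I, (x s ⬝ᵥ δ) • x s := by
  ext i
  simp only [mulVec, dotProduct, gramOn, of_apply, sum_mul, Finset.sum_apply, Pi.smul_apply,
    smul_eq_mul]
  rw [sum_comm]
  exact sum_congr rfl fun s _ => sum_congr rfl fun j _ => by ring

theorem dotProduct_eq_sum_gramOn_inv {I : Finset (Fin N)} (hG : IsUnit (gramOn n N x I))
    (t : Fin N) (δ : Fin n → ℝ) :
    x t ⬝ᵥ δ = ∑ s ∈ I, (x s ⬝ᵥ (gramOn n N x I)⁻¹ *ᵥ x t) * (x s ⬝ᵥ δ) := by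
  have hδ : δ = (gramOn n N x I)⁻¹ *ᵥ (gramOn n N x I *ᵥ δ) := by
    rw [mulVec_mulVec, nonsing_inv_mul _ ((isUnit_iff_isUnit_det _).mp hG), one_mulVec]
  conv_lhs => rw [hδ, gramOn_mulVec]
  simp only [mulVec_sum, mulVec_smul, dotProduct_sum, dotProduct_smul, smul_eq_mul]
  refine sum_congr rfl fun s _ => ?_
  rw [mul_comm, dotProduct_mulVec_comm_of_isSymm (isSymm_gramOn n N x I).inv]

theorem sum_compl_abs_dotProduct_le {I : Finset (Fin N)} (hG : IsUnit (gramOn n N x I))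
    (hnorm : ∀ s ∈ I, ∑ t ∈ Iᶜ, |x s ⬝ᵥ (gramOn n N x I)⁻¹ *ᵥ x t| ≤ 1) (δ : Fin n → ℝ) :
    ∑ t ∈ Iᶜ, |x t ⬝ᵥ δ| ≤ ∑ s ∈ I, |x s ⬝ᵥ δ| := by
  set c : Fin N → Fin N → ℝ := fun s t => x s ⬝ᵥ (gramOn n N x I)⁻¹ *ᵥ x t
  calc ∑ t ∈ Iᶜ, |x t ⬝ᵥ δ|
      = ∑ t ∈ Iᶜ, |∑ s ∈ I, c s t * (x s ⬝ᵥ δ)| := by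
        simp only [c, ← dotProduct_eq_sum_gramOn_inv n N x hG]
    _ ≤ ∑ t ∈ Iᶜ, ∑ s ∈ I, |c s t| * |x s ⬝ᵥ δ| := by
        gcongr with t
        exact (abs_sum_le_sum_abs _ _).trans_eq (sum_congr rfl fun s _ => abs_mul _ _)
    _ = ∑ s ∈ I, (∑ t ∈ Iᶜ, |c s t|) * |x s ⬝ᵥ δ| := by
        rw [sum_comm]
        simp only [sum_mul]
    _ ≤ ∑ s ∈ I, |x s ⬝ᵥ δ| := by
        gcongr with s hs
        exact mul_le_of_le_one_left (abs_nonneg _) (hnorm s hs)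

end Regressors

theorem sum_abs_le_sum_abs_sub_of_eq_zero_on {ι : Type*} [Fintype ι] [DecidableEq ι]
    (I : Finset ι) {r d : ι → ℝ} (hr : ∀ s ∈ I, r s = 0)
    (hd : ∑ t ∈ Iᶜ, |d t| ≤ ∑ s ∈ I, |d s|) :
    ∑ t, |r t| ≤ ∑ t, |r t - d t| := by
  have hrI : ∑ s ∈ I, |r s| = 0 := sum_eq_zero fun s hs => by simp [hr s hs]
  have hrdI : ∑ s ∈ I, |r s - d s| = ∑ s ∈ I, |d s| :=
    sum_congr rfl fun s hs => by simp [hr s hs]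
  have htri : ∑ t ∈ Iᶜ, |r t| ≤ ∑ t ∈ Iᶜ, |r t - d t| + ∑ t ∈ Iᶜ, |d t| := by
    rw [← sum_add_distrib]
    exact sum_le_sum fun t _ => by linarith [abs_sub_abs_le_abs_sub (r t) (d t)]
  rw [← sum_add_sum_compl I, ← sum_add_sum_compl I fun t => |r t - d t|, hrI, hrdI]
  linarith

theorem stmt7_general (n N : ℕ)
    (x : Fin N → Fin n → ℝ) (y : Fin N → ℝ)
    (hrank : (Matrix.of fun i t => x t i : Matrix (Fin n) (Fin N) ℝ).rank = n)
    (k : ℕ) (hk1 : nuX n N x ≤ k)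
    (hnorm : ∀ I : Finset (Fin N), I.card = k → ∀ s ∈ I,
      ∑ t ∈ Iᶜ, |x s ⬝ᵥ ((gramOn n N x I)⁻¹ *ᵥ x t)| ≤ 1) :
    ∀ θ : Fin n → ℝ, k ≤ (univ.filter (fun t => x t ⬝ᵥ θ = y t)).card →
      ∀ θ' : Fin n → ℝ, ∑ t, |y t - x t ⬝ᵥ θ| ≤ ∑ t, |y t - x t ⬝ᵥ θ'| := by
  intro θ hθ θ'
  obtain ⟨I, hIθ, rfl⟩ := exists_subset_card_eq hθ
  have hG : IsUnit (gramOn n N x I) := isUnit_gramOn n N x (rank_colSub_of_nuX_le n N x hrank hk1)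
  have hnull := sum_compl_abs_dotProduct_le n N x hG (hnorm I rfl) (θ' - θ)
  have hfit : ∀ s ∈ I, y s - x s ⬝ᵥ θ = 0 := fun s hs =>
    sub_eq_zero.mpr (mem_filter.mp (hIθ hs)).2.symm
  convert sum_abs_le_sum_abs_sub_of_eq_zero_on I hfit hnull using 3 with t
  rw [dotProduct_sub]
  ring

/-- If `rank X = n`, `ν_n(X) ≤ k ≤ N`, and for every `I` with
`|I| = k` the induced ∞-norm of `X_I^⊤ (X_I X_I^⊤)⁻¹ X_{Iᶜ}` (row indexed by
`I`, columns by `Iᶜ`) is at most 1, then every `θ` with `|I⁰(θ)| ≥ k` solves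
the ℓ1 problem. -/
theorem stmt7 (n N : ℕ) (hn : 1 ≤ n) (hN : 1 ≤ N)
    (x : Fin N → Fin n → ℝ) (y : Fin N → ℝ)
    (hrank : (Matrix.of fun i t => x t i : Matrix (Fin n) (Fin N) ℝ).rank = n)
    (k : ℕ) (hk1 : nuX n N x ≤ k) (hk2 : k ≤ N)
    (hnorm : ∀ I : Finset (Fin N), I.card = k → ∀ s ∈ I,
      ∑ t ∈ Iᶜ, |x s ⬝ᵥ ((gramOn n N x I)⁻¹ *ᵥ x t)| ≤ 1) :
    ∀ θ : Fin n → ℝ, k ≤ (univ.filter (fun t => x t ⬝ᵥ θ = y t)).card →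
      ∀ θ' : Fin n → ℝ, ∑ t, |y t - x t ⬝ᵥ θ| ≤ ∑ t, |y t - x t ⬝ᵥ θ'| :=
  stmt7_general n N x y hrank k hk1 hnorm
end
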